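/- Let λ, λ' ∈ ℂ with λ ∉ ℤ, λ' ∉ ℤ and λ+λ' ∉ ℤ, and set α = λ−1, β = λ'−1. Then for every N ∈ ℕ and every 0 ≤ k ≤ N, the little q-Jacobi polynomial has the expansion j_k^{λ−1,λ'−1}(X) = Σ_{l=0}^N [N choose l]_q q^{−l(N−l)} Q_k^{(N)}(q^{−2l}) (∏_{s=0}^{N−l−1}(1−q^{−2s}X)) X^l, an identity in ℂ[X] valid for every N ≥ k. -/

import Mathlib

noncomputable section

open Finset Polynomial

/-- The `q`-number `[x] = (q^x - q^{-x})/(q - q⁻¹)`, with `q^x = exp(x log q)`. -/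
def qnum (q x : ℂ) : ℂ := (q ^ x - q ^ (-x)) / (q - q⁻¹)

/-- `[x]_n = ∏_{s=0}^{n-1} [x+s]`. -/
def qpoch (q x : ℂ) (n : ℕ) : ℂ := ∏ s ∈ Finset.range n, qnum q (x + s)

/-- `[n]! = [1]_n`. -/
def qfact (q : ℂ) (n : ℕ) : ℂ := ∏ s ∈ Finset.range n, qnum q ((s : ℂ) + 1)

/-- The `q`-binomial coefficient `[n choose k] = [n]!/([k]![n-k]!)`. -/
def qbinom (q : ℂ) (n k : ℕ) : ℂ := qfact q n / (qfact q k * qfact q (n - k))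

/-- The little `q`-Jacobi polynomial
`j_n^{α,β}(X) = Σ_{k=0}^n ([−n]_k [n+α+β+1]_k q^{k(β+1)} / ([α+1]_k [k]!)) X^k`. -/
def jlittle (q a b : ℂ) (n : ℕ) : Polynomial ℂ :=
  ∑ k ∈ Finset.range (n + 1),
    Polynomial.C (qpoch q (-(n : ℂ)) k * qpoch q ((n : ℂ) + a + b + 1) k
        * q ^ ((k : ℂ) * (b + 1)) / (qpoch q (a + 1) k * qfact q k))
      * Polynomial.X ^ k
/-- The q-Hahn polynomial value
Q_k^{(N)}(q^{−2l}) = Σ_{i=0}^k [k choose i] q^{i(β+1+N−l)} (−1)^i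
[k+α+β+1]_i [−l]_i / ([α+1]_i [−N]_i). -/
def qHahn (q a b : ℂ) (N k l : ℕ) : ℂ :=
  ∑ i ∈ Finset.range (k + 1),
    qbinom q k i * q ^ ((i : ℂ) * (b + 1 + (N : ℂ) - (l : ℂ))) * (-1) ^ i
      * qpoch q ((k : ℂ) + a + b + 1) i * qpoch q (-(l : ℂ)) i
      / (qpoch q (a + 1) i * qpoch q (-(N : ℂ)) i)

/-! Expanding `Q_k^{(N)}(q^{-2l})` and exchanging the sums reduces the theorem to the moment
identity `Σ_l [N choose l] q^{(i-l)(N-l)} [-l]_i (X; q⁻²)_{N-l} X^l = [-N]_i X^i` for `i ≤ N`.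
Since `[N choose l] [-l]_i = [-N]_i [N-i choose l-i]`, its left side is `[-N]_i X^i` times the
partition of unity `Σ_m q^{-m(M-m)} [M choose m] (X; q⁻²)_{M-m} X^m = 1` of the `q`-Bernstein
basis, which follows by induction on `M` from the `q`-Pascal rule. Once `[-N]_i` cancels, the
identity `(-1)^i [k choose i] [i]! = [-k]_i` turns the remaining coefficients into those of
`j_k`. -/

lemma sub_inv_ne_zero_of_sq_ne_one {K : Type*} [Field K] {x : K} (hx : x ≠ 0)
    (h : x ^ 2 ≠ 1) : x - x⁻¹ ≠ 0 := by
  intro h0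
  apply h
  field_simp at h0
  linear_combination h0

section

variable {q : ℂ}

lemma qnum_zero : qnum q 0 = 0 := by simp [qnum]

lemma qnum_neg (x : ℂ) : qnum q (-x) = -qnum q x := by
  simp only [qnum, neg_neg]
  ring

lemma qnum_add (hq0 : q ≠ 0) (x y : ℂ) :
    qnum q (x + y) = q ^ y * qnum q x + q ^ (-x) * qnum q y := by
  simp only [qnum, neg_add, Complex.cpow_add _ _ hq0]
  ring

lemma qnum_natCast (n : ℕ) : qnum q n = (q ^ n - (q ^ n)⁻¹) / (q - q⁻¹) := by
  simp [qnum, Complex.cpow_neg]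

lemma qnum_natCast_ne_zero (hq0 : q ≠ 0) (hq : ∀ m : ℕ, 0 < m → q ^ m ≠ 1) {n : ℕ}
    (hn : n ≠ 0) : qnum q n ≠ 0 := by
  have hsq {m : ℕ} (hm : 0 < m) : (q ^ m) ^ 2 ≠ 1 := by
    rw [← pow_mul]
    exact hq _ (by positivity)
  rw [qnum_natCast]
  refine div_ne_zero (sub_inv_ne_zero_of_sq_ne_one (pow_ne_zero _ hq0) (hsq (by omega))) ?_
  simpa using sub_inv_ne_zero_of_sq_ne_one hq0 (by simpa using hsq one_pos)

lemma qfact_zero : qfact q 0 = 1 := prod_range_zero _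

lemma qfact_succ (n : ℕ) : qfact q (n + 1) = qfact q n * qnum q ((n : ℂ) + 1) :=
  prod_range_succ _ n

lemma qfact_ne_zero (hq0 : q ≠ 0) (hq : ∀ m : ℕ, 0 < m → q ^ m ≠ 1) (n : ℕ) :
    qfact q n ≠ 0 :=
  prod_ne_zero_iff.2 fun s _ => by
    exact_mod_cast qnum_natCast_ne_zero hq0 hq s.succ_ne_zero

lemma qpoch_succ (x : ℂ) (n : ℕ) : qpoch q x (n + 1) = qpoch q x n * qnum q (x + n) :=
  prod_range_succ _ n

lemma qpoch_neg_natCast_of_lt {l i : ℕ} (h : l < i) : qpoch q (-(l : ℂ)) i = 0 :=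
  prod_eq_zero (mem_range.2 h) (by simp [qnum_zero])

lemma qpoch_neg_natCast_mul_qfact {n i : ℕ} (h : i ≤ n) :
    qpoch q (-(n : ℂ)) i * qfact q (n - i) = (-1) ^ i * qfact q n := by
  induction i with
  | zero => simp [qpoch]
  | succ i ih =>
    have hsub : n - i = n - (i + 1) + 1 := by omega
    have hqnum : qnum q (-(n : ℂ) + i) = -qnum q ((n - (i + 1) : ℕ) + 1) := by
      rw [← qnum_neg]
      congr 1
      push_cast [Nat.cast_sub h]
      ring
    have ih := ih (by omega)
    rw [hsub, qfact_succ] at ih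
    rw [qpoch_succ, hqnum, pow_succ]
    linear_combination -ih

lemma qpoch_neg_natCast (hq0 : q ≠ 0) (hq : ∀ m : ℕ, 0 < m → q ^ m ≠ 1) {n i : ℕ}
    (h : i ≤ n) : qpoch q (-(n : ℂ)) i = (-1) ^ i * qfact q n / qfact q (n - i) :=
  eq_div_of_mul_eq (qfact_ne_zero hq0 hq _) (qpoch_neg_natCast_mul_qfact h)

lemma qpoch_neg_natCast_ne_zero (hq0 : q ≠ 0) (hq : ∀ m : ℕ, 0 < m → q ^ m ≠ 1) {n i : ℕ}
    (h : i ≤ n) : qpoch q (-(n : ℂ)) i ≠ 0 := by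
  rw [qpoch_neg_natCast hq0 hq h]
  exact div_ne_zero (mul_ne_zero (pow_ne_zero _ (by norm_num)) (qfact_ne_zero hq0 hq n))
    (qfact_ne_zero hq0 hq _)

lemma qpoch_neg_natCast_eq_qbinom (hq0 : q ≠ 0) (hq : ∀ m : ℕ, 0 < m → q ^ m ≠ 1) {n i : ℕ}
    (h : i ≤ n) : qpoch q (-(n : ℂ)) i = (-1) ^ i * qbinom q n i * qfact q i := by
  have := qfact_ne_zero hq0 hq i
  have := qfact_ne_zero hq0 hq (n - i)
  rw [qpoch_neg_natCast hq0 hq h, qbinom]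
  field_simp

lemma qbinom_mul_qpoch_neg_natCast (hq0 : q ≠ 0) (hq : ∀ m : ℕ, 0 < m → q ^ m ≠ 1)
    {N i m : ℕ} (h : i + m ≤ N) :
    qbinom q N (i + m) * qpoch q (-((i + m : ℕ) : ℂ)) i
      = qpoch q (-(N : ℂ)) i * qbinom q (N - i) m := by
  have := qfact_ne_zero hq0 hq m
  have := qfact_ne_zero hq0 hq (N - i)
  have := qfact_ne_zero hq0 hq (N - i - m)
  have := qfact_ne_zero hq0 hq (i + m)
  rw [qpoch_neg_natCast hq0 hq (by omega : i ≤ i + m),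
    qpoch_neg_natCast hq0 hq (by omega : i ≤ N),
    qbinom, qbinom, Nat.add_sub_cancel_left, Nat.sub_sub]
  field_simp

/-- The `q`-binomial coefficient extended by zero beyond `k = n` (where `qbinom` takes junk
values through truncated subtraction), so that the `q`-Pascal rule holds without side
conditions. -/
def qchoose (q : ℂ) (n k : ℕ) : ℂ := if k ≤ n then qbinom q n k else 0

/-- The `q`-shifted factorial `(X; q⁻²)_m`. -/
def qPochPoly (q : ℂ) (m : ℕ) : ℂ[X] :=
  ∏ s ∈ range m, (1 - C (q ^ (-2 * (s : ℤ))) * X)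

lemma qchoose_of_le {n k : ℕ} (h : k ≤ n) : qchoose q n k = qbinom q n k := if_pos h

lemma qchoose_of_lt {n k : ℕ} (h : n < k) : qchoose q n k = 0 := if_neg (by omega)

lemma qchoose_zero_right (hq0 : q ≠ 0) (hq : ∀ m : ℕ, 0 < m → q ^ m ≠ 1) (n : ℕ) :
    qchoose q n 0 = 1 := by
  rw [qchoose_of_le n.zero_le, qbinom, Nat.sub_zero, qfact_zero, one_mul,
    div_self (qfact_ne_zero hq0 hq n)]

lemma qchoose_self (hq0 : q ≠ 0) (hq : ∀ m : ℕ, 0 < m → q ^ m ≠ 1) (n : ℕ) :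
    qchoose q n n = 1 := by
  rw [qchoose_of_le le_rfl, qbinom, Nat.sub_self, qfact_zero, mul_one,
    div_self (qfact_ne_zero hq0 hq n)]

lemma qchoose_succ_succ (hq0 : q ≠ 0) (hq : ∀ m : ℕ, 0 < m → q ^ m ≠ 1) (n k : ℕ) :
    qchoose q (n + 1) (k + 1)
      = q ^ ((k : ℤ) + 1) * qchoose q n (k + 1) + q ^ (-((n : ℤ) - k)) * qchoose q n k := by
  rcases lt_trichotomy k n with hkn | rfl | hnk
  · obtain ⟨d, rfl⟩ : ∃ d, n = k + 1 + d := ⟨n - k - 1, by omega⟩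
    have hsplit : qnum q ((k + 1 + d : ℕ) + 1)
        = q ^ (k + 1) * qnum q ((d : ℂ) + 1) + (q ^ (d + 1))⁻¹ * qnum q ((k : ℂ) + 1) := by
      rw [show (((k + 1 + d : ℕ) : ℂ) + 1) = ((d : ℂ) + 1) + ((k : ℂ) + 1) by push_cast; ring,
        qnum_add hq0, Complex.cpow_neg]
      norm_cast
    have := qfact_ne_zero hq0 hq k
    have := qfact_ne_zero hq0 hq d
    have : qnum q ((k : ℂ) + 1) ≠ 0 := by
      exact_mod_cast qnum_natCast_ne_zero hq0 hq k.succ_ne_zero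
    have : qnum q ((d : ℂ) + 1) ≠ 0 := by
      exact_mod_cast qnum_natCast_ne_zero hq0 hq d.succ_ne_zero
    rw [qchoose_of_le (by omega), qchoose_of_le (by omega), qchoose_of_le (by omega),
      qbinom, qbinom, qbinom, show k + 1 + d + 1 - (k + 1) = d + 1 by omega,
      show k + 1 + d - (k + 1) = d by omega, show k + 1 + d - k = d + 1 by omega,
      qfact_succ, qfact_succ, qfact_succ, hsplit,
      show -(((k + 1 + d : ℕ) : ℤ) - k) = -((d + 1 : ℕ) : ℤ) by push_cast; ring,
      zpow_neg, zpow_natCast, zpow_add_one₀ hq0, zpow_natCast]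
    field_simp
    ring
  · rw [qchoose_self hq0 hq, qchoose_of_lt (by omega), qchoose_self hq0 hq]
    simp
  · rw [qchoose_of_lt (by omega), qchoose_of_lt (by omega), qchoose_of_lt hnk]
    simp

lemma qPochPoly_succ (m : ℕ) :
    qPochPoly q (m + 1) = qPochPoly q m * (1 - C (q ^ (-2 * (m : ℤ))) * X) :=
  prod_range_succ _ m

/-- The `q`-Bernstein basis polynomial; its weight `q^{-m(M-m)} [M choose m]` is the Gaussian
binomial coefficient in base `q⁻²`. -/
def qBernstein (q : ℂ) (M m : ℕ) : ℂ[X] :=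
  C (qchoose q M m * q ^ (-((m : ℤ) * ((M : ℤ) - m)))) * qPochPoly q (M - m) * X ^ m

theorem sum_qBernstein (hq0 : q ≠ 0) (hq : ∀ m : ℕ, 0 < m → q ^ m ≠ 1) (M : ℕ) :
    ∑ m ∈ range (M + 1), qBernstein q M m = 1 := by
  induction M with
  | zero => simp [qBernstein, qchoose_self hq0 hq, qPochPoly]
  | succ M ih =>
    set U : ℕ → ℂ[X] := fun m => C (q ^ (m : ℤ) * qchoose q M m
      * q ^ (-((m : ℤ) * ((M : ℤ) + 1 - m)))) * qPochPoly q (M + 1 - m) * X ^ m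
    set V : ℕ → ℂ[X] := fun m => C (q ^ (-((M : ℤ) - m)) * qchoose q M m
      * q ^ (-(((m : ℤ) + 1) * ((M : ℤ) - m)))) * qPochPoly q (M - m) * X ^ (m + 1)
    have hzero : qBernstein q (M + 1) 0 = U 0 := by
      simp [qBernstein, U, qchoose_zero_right hq0 hq]
    have hpascal (m : ℕ) : qBernstein q (M + 1) (m + 1) = U (m + 1) + V m := by
      simp only [qBernstein, U, V, qchoose_succ_succ hq0 hq, Nat.add_sub_add_right]
      push_cast
      simp only [C_mul, C_add]
      ring_nf
    have htop : U (M + 1) = 0 := by simp [U, qchoose_of_lt]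
    have hcancel {m : ℕ} (hm : m ≤ M) : U m + V m = qBernstein q M m := by
      have hexp₁ : q ^ (m : ℤ) * q ^ (-((m : ℤ) * ((M : ℤ) + 1 - m)))
          = q ^ (-((m : ℤ) * ((M : ℤ) - m))) := by
        rw [← zpow_add₀ hq0]; ring_nf
      have hexp₂ : q ^ (-((M : ℤ) - m)) * q ^ (-(((m : ℤ) + 1) * ((M : ℤ) - m)))
          = q ^ (-((m : ℤ) * ((M : ℤ) - m))) * q ^ (-2 * ((M - m : ℕ) : ℤ)) := by
        rw [← zpow_add₀ hq0, ← zpow_add₀ hq0]; push_cast [hm]; ring_nf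
      have h₁ := congrArg C hexp₁
      have h₂ := congrArg C hexp₂
      simp only [U, V, qBernstein, show M + 1 - m = M - m + 1 by omega, qPochPoly_succ, C_mul]
        at h₁ h₂ ⊢
      linear_combination (C (qchoose q M m) * qPochPoly q (M - m) * X ^ m) *
        ((1 - C (q ^ (-2 * ((M - m : ℕ) : ℤ))) * X) * h₁ + X * h₂)
    calc ∑ m ∈ range (M + 1 + 1), qBernstein q (M + 1) m
        = (∑ m ∈ range (M + 1), U (m + 1) + U 0) + ∑ m ∈ range (M + 1), V m := by
          rw [sum_range_succ', hzero]
          simp only [hpascal, sum_add_distrib]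
          ring
      _ = ∑ m ∈ range (M + 1), (U m + V m) := by
          rw [← sum_range_succ', sum_range_succ, htop, add_zero, sum_add_distrib]
      _ = 1 := by
          rw [← ih]
          exact sum_congr rfl fun m hm => hcancel (by simpa [Nat.lt_succ_iff] using hm)

theorem sum_qbinom_mul_qpoch_neg_mul_qPochPoly (hq0 : q ≠ 0)
    (hq : ∀ m : ℕ, 0 < m → q ^ m ≠ 1) {N i : ℕ} (hi : i ≤ N) :
    ∑ l ∈ range (N + 1), C (qbinom q N l * q ^ (((i : ℤ) - l) * ((N : ℤ) - l))
        * qpoch q (-(l : ℂ)) i) * qPochPoly q (N - l) * X ^ l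
      = C (qpoch q (-(N : ℂ)) i) * X ^ i := by
  obtain ⟨M, rfl⟩ : ∃ M, N = i + M := ⟨N - i, by omega⟩
  rw [← sum_range_add_sum_Ico _ (by omega : i ≤ i + M + 1),
    sum_eq_zero fun l hl => by rw [qpoch_neg_natCast_of_lt (mem_range.1 hl)]; simp,
    zero_add, sum_Ico_eq_sum_range, show i + M + 1 - i = M + 1 by omega]
  calc _ = ∑ m ∈ range (M + 1),
          C (qpoch q (-((i + M : ℕ) : ℂ)) i) * X ^ i * qBernstein q M m := by
        refine sum_congr rfl fun m hm => ?_
        have hmM : m ≤ M := Nat.lt_succ_iff.1 (mem_range.1 hm)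
        have key := congrArg C
          (qbinom_mul_qpoch_neg_natCast hq0 hq (N := i + M) (i := i) (m := m) (by omega))
        rw [Nat.add_sub_cancel_left] at key
        rw [qBernstein, qchoose_of_le hmM, Nat.add_sub_add_left, pow_add,
          show ((i : ℤ) - ((i + m : ℕ) : ℤ)) * (((i + M : ℕ) : ℤ) - ((i + m : ℕ) : ℤ))
            = -((m : ℤ) * ((M : ℤ) - m)) by push_cast; ring]
        simp only [C_mul] at key ⊢
        linear_combination
          (C (q ^ (-((m : ℤ) * ((M : ℤ) - m)))) * qPochPoly q (M - m) * X ^ i * X ^ m) * key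
    _ = C (qpoch q (-((i + M : ℕ) : ℂ)) i) * X ^ i := by
        rw [← mul_sum, sum_qBernstein hq0 hq, mul_one]

def jlittleCoeff (q a b : ℂ) (n k : ℕ) : ℂ :=
  qpoch q (-(n : ℂ)) k * qpoch q ((n : ℂ) + a + b + 1) k
    * q ^ ((k : ℂ) * (b + 1)) / (qpoch q (a + 1) k * qfact q k)

lemma qbinom_mul_qHahn (hq0 : q ≠ 0) (hq : ∀ m : ℕ, 0 < m → q ^ m ≠ 1) {N k : ℕ}
    (hkN : k ≤ N) (a b : ℂ) (l : ℕ) :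
    qbinom q N l * q ^ (-((l : ℤ) * ((N : ℤ) - l))) * qHahn q a b N k l
      = ∑ i ∈ range (k + 1), jlittleCoeff q a b k i / qpoch q (-(N : ℂ)) i
          * (qbinom q N l * q ^ (((i : ℤ) - l) * ((N : ℤ) - l)) * qpoch q (-(l : ℂ)) i) := by
  rw [qHahn, mul_sum]
  refine sum_congr rfl fun i hi => ?_
  have hik : i ≤ k := Nat.lt_succ_iff.1 (mem_range.1 hi)
  have hN := qpoch_neg_natCast_ne_zero hq0 hq (hik.trans hkN)
  have hF := qfact_ne_zero hq0 hq i
  rw [jlittleCoeff, qpoch_neg_natCast_eq_qbinom hq0 hq hik,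
    show (i : ℂ) * (b + 1 + N - l) = (i : ℂ) * (b + 1) + ((i * ((N : ℤ) - l) : ℤ) : ℂ) by
      push_cast; ring,
    Complex.cpow_add _ _ hq0, Complex.cpow_intCast,
    show ((i : ℤ) - l) * ((N : ℤ) - l) = -((l : ℤ) * ((N : ℤ) - l)) + i * ((N : ℤ) - l) by ring,
    zpow_add₀ hq0]
  rcases eq_or_ne (qpoch q (a + 1) i) 0 with hD | hD
  · simp [hD]
  · field_simp

end

theorem jlittle_qHahn_expansion_general (q : ℂ) (hq0 : q ≠ 0)
    (hq : ∀ m : ℕ, 0 < m → q ^ m ≠ 1)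
    (lam lam' : ℂ) (N k : ℕ) (hkN : k ≤ N) :
    jlittle q (lam - 1) (lam' - 1) k
      = ∑ l ∈ Finset.range (N + 1),
          Polynomial.C (qbinom q N l * q ^ (-((l : ℤ) * ((N : ℤ) - (l : ℤ))))
              * qHahn q (lam - 1) (lam' - 1) N k l)
            * (∏ s ∈ Finset.range (N - l),
                (1 - Polynomial.C (q ^ (-2 * (s : ℤ))) * Polynomial.X))
            * Polynomial.X ^ l := by
  symm
  calc _ = ∑ l ∈ range (N + 1), ∑ i ∈ range (k + 1),
        C (jlittleCoeff q (lam - 1) (lam' - 1) k i / qpoch q (-(N : ℂ)) i)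
          * (C (qbinom q N l * q ^ (((i : ℤ) - l) * ((N : ℤ) - l)) * qpoch q (-(l : ℂ)) i)
            * qPochPoly q (N - l) * X ^ l) := by
        refine sum_congr rfl fun l _ => ?_
        simp only [qbinom_mul_qHahn hq0 hq hkN, map_sum, sum_mul, C_mul, mul_assoc, qPochPoly]
    _ = ∑ i ∈ range (k + 1), C (jlittleCoeff q (lam - 1) (lam' - 1) k i / qpoch q (-(N : ℂ)) i)
          * (C (qpoch q (-(N : ℂ)) i) * X ^ i) := by
        rw [sum_comm]
        refine sum_congr rfl fun i hi => ?_
        rw [← mul_sum, sum_qbinom_mul_qpoch_neg_mul_qPochPoly hq0 hq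
          ((Nat.lt_succ_iff.1 (mem_range.1 hi)).trans hkN)]
    _ = jlittle q (lam - 1) (lam' - 1) k := by
        refine sum_congr rfl fun i hi => ?_
        rw [← mul_assoc, ← C_mul, div_mul_cancel₀ _ (qpoch_neg_natCast_ne_zero hq0 hq
          ((Nat.lt_succ_iff.1 (mem_range.1 hi)).trans hkN))]
        rfl

/-- **Little q-Jacobi polynomials expanded via q-Hahn polynomials** (formula (4.2)):
for every N ≥ k, with α = λ−1, β = λ'−1,
j_k^{λ−1,λ'−1}(X) = Σ_{l=0}^N [N choose l] q^{−l(N−l)} Q_k^{(N)}(q^{−2l})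
∏_{s=0}^{N−l−1}(1−q^{−2s}X) · X^l. -/
theorem jlittle_qHahn_expansion (q : ℂ) (hq0 : q ≠ 0)
    (hq : ∀ m : ℕ, 0 < m → q ^ m ≠ 1)
    (lam lam' : ℂ) (hl : ∀ m : ℤ, lam ≠ (m : ℂ)) (hl' : ∀ m : ℤ, lam' ≠ (m : ℂ))
    (hll : ∀ m : ℤ, lam + lam' ≠ (m : ℂ)) (N k : ℕ) (hkN : k ≤ N) :
    jlittle q (lam - 1) (lam' - 1) k
      = ∑ l ∈ Finset.range (N + 1),
          Polynomial.C (qbinom q N l * q ^ (-((l : ℤ) * ((N : ℤ) - (l : ℤ))))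
              * qHahn q (lam - 1) (lam' - 1) N k l)
            * (∏ s ∈ Finset.range (N - l),
                (1 - Polynomial.C (q ^ (-2 * (s : ℤ))) * Polynomial.X))
            * Polynomial.X ^ l :=
  jlittle_qHahn_expansion_general q hq0 hq lam lam' N k hkN
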